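/- For every E ∈ Σ_II ∪ Σ_III: E ≠ 0; ν_n(E) ≠ 0 for all n ≥ 1; ω_n(E)/ν_n(E) = (E² − λ²)/(2E) for all n ≥ 1; and |(E² − λ²)/(2E)| < 1. -/
import Mathlib


noncomputable section

open Filter Topology

namespace TMH

/-- the pair `(A_n(E), B_n(E))`:  `A_0 = [[E−λ,−1],[1,0]]`, `B_0 = [[E+λ,−1],[1,0]]`,
`A_{n+1} = B_n A_n`, `B_{n+1} = A_n B_n`. -/
def AB (lam E : ℝ) : ℕ → Matrix (Fin 2) (Fin 2) ℝ × Matrix (Fin 2) (Fin 2) ℝ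
  | 0 => (!![E - lam, -1; 1, 0], !![E + lam, -1; 1, 0])
  | n + 1 => ((AB lam E n).2 * (AB lam E n).1, (AB lam E n).1 * (AB lam E n).2)

def A (lam E : ℝ) (n : ℕ) : Matrix (Fin 2) (Fin 2) ℝ := (AB lam E n).1
def B (lam E : ℝ) (n : ℕ) : Matrix (Fin 2) (Fin 2) ℝ := (AB lam E n).2

/-- the trace polynomials `t_n(E) = tr(A_n(E))` -/
def t (lam E : ℝ) (n : ℕ) : ℝ := (A lam E n).trace

/-- the set `Σ_I` of type-I energies -/
def SigmaI (lam : ℝ) : Set ℝ := {E | ∃ k : ℕ, 1 ≤ k ∧ t lam E k = 0}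

/-- the set `Σ_II` of type-II energies -/
def SigmaII (lam : ℝ) : Set ℝ :=
  {E | ∃ n₀ : ℕ, ∀ n : ℕ, n₀ ≤ n → |t lam E (2 * n)| ≤ 2 ∧ 2 < |t lam E (2 * n + 1)|}

/-- the set `Σ_III` of type-III energies -/
def SigmaIII (lam : ℝ) : Set ℝ :=
  {E | ∃ n₀ : ℕ, ∀ n : ℕ, n₀ ≤ n → |t lam E (2 * n + 1)| ≤ 2 ∧ 2 < |t lam E (2 * n)|}

end TMH
namespace TMH

def U : Matrix (Fin 2) (Fin 2) ℝ := !![0, 1; 1, 0]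
def V : Matrix (Fin 2) (Fin 2) ℝ := !![1, 0; 0, -1]
def W : Matrix (Fin 2) (Fin 2) ℝ := !![0, -1; 1, 0]

end TMH
namespace TMH

lemma ch_tr (X Y : Matrix (Fin 2) (Fin 2) ℝ) (hX : X.det = 1) (hY : Y.det = 1)
    (hT : X.trace = Y.trace) :
    ((X * Y) * (Y * X)).trace = X.trace ^ 2 * ((X * Y).trace - 2) + 2 := by
  simp only [Matrix.det_fin_two] at hX hY
  simp only [Matrix.trace_fin_two] at hT ⊢
  simp only [Matrix.mul_apply, Fin.sum_univ_two]
  linear_combination (-(Y 1 1 * Y 1 1) - 2*(Y 0 1 * Y 1 0) - Y 0 0 * Y 0 0) * hX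
    + (2 - X 1 1 * X 1 1 - 2*(X 0 0 * X 1 1) - X 0 0 * X 0 0) * hY
    + (Y 1 1 + Y 0 0 + X 1 1 - X 1 1 * X 1 1 * Y 1 1 - X 1 0 * X 1 1 * Y 0 1
       - X 0 1 * X 1 1 * Y 1 0 + X 0 0 - X 0 0 * X 1 1 * Y 1 1 - X 0 0 * X 1 1 * Y 0 0
       - X 0 0 * X 1 0 * Y 0 1 - X 0 0 * X 0 1 * Y 1 0 - X 0 0 * X 0 0 * Y 0 0) * hT

lemma key_mat (X Y : Matrix (Fin 2) (Fin 2) ℝ) (hX : X.det = 1) (hY : Y.det = 1)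
    (hT : X.trace = Y.trace) :
    (X * Y) * (Y * X) - (Y * X) * (X * Y) = (X.trace * ((X * Y).trace - 2)) • (X - Y) := by
  simp only [Matrix.det_fin_two] at hX hY
  simp only [Matrix.trace_fin_two] at hT
  ext i j
  simp only [Matrix.trace_fin_two, Matrix.sub_apply, Matrix.smul_apply, Matrix.mul_apply,
    Fin.sum_univ_two, smul_eq_mul]
  fin_cases i <;> fin_cases j <;> simp only [Fin.mk_zero, Fin.mk_one, Fin.isValue]
  · linear_combination (1 + Y 0 1*Y 1 0 + Y 0 0*Y 0 0 - X 1 1*Y 1 1 - X 0 0*Y 1 1) * hX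
      + (-1 + X 1 1*X 1 1 - X 0 1*X 1 0 + X 0 0*X 1 1 - X 0 0*X 0 0) * hY
      + (-(Y 0 0) + X 1 1 - X 0 1*X 1 0*Y 1 1 + X 0 0 - X 0 0*X 1 0*Y 0 1
         - X 0 0*X 0 1*Y 1 0 - X 0 0*X 0 0*Y 0 0) * hT
  · linear_combination (Y 0 1*Y 1 1 + Y 0 0*Y 0 1 + X 1 1*Y 0 1 + X 0 0*Y 0 1) * hX
      + (-2*(X 0 1*X 1 1) - 2*(X 0 0*X 0 1)) * hY
      + (-(Y 0 1) - X 0 1*X 1 1*Y 1 1 - X 0 1*X 0 1*Y 1 0 - X 0 0*X 1 1*Y 0 1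
         - X 0 0*X 0 1*Y 0 0) * hT
  · linear_combination (Y 1 0*Y 1 1 + Y 0 0*Y 1 0 + X 1 1*Y 1 0 + X 0 0*Y 1 0) * hX
      + (-2*(X 1 0*X 1 1) - 2*(X 0 0*X 1 0)) * hY
      + (-(Y 1 0) - X 1 0*X 1 1*Y 1 1 - X 1 0*X 1 0*Y 0 1 - X 0 0*X 1 1*Y 1 0
         - X 0 0*X 1 0*Y 0 0) * hT
  · linear_combination (1 + Y 1 1*Y 1 1 + Y 0 1*Y 1 0 - X 1 1*Y 0 0 - X 0 0*Y 0 0) * hX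
      + (-1 - X 1 1*X 1 1 - X 0 1*X 1 0 + X 0 0*X 1 1 + X 0 0*X 0 0) * hY
      + (-(Y 1 1) + X 1 1 - X 1 1*X 1 1*Y 1 1 - X 1 0*X 1 1*Y 0 1 - X 0 1*X 1 1*Y 1 0
         - X 0 1*X 1 0*Y 0 0 + X 0 0) * hT

lemma det_AB (lam E : ℝ) : ∀ n, (A lam E n).det = 1 ∧ (B lam E n).det = 1 := by
  intro n
  induction n with
  | zero => constructor <;> norm_num [A, B, AB, Matrix.det_fin_two_of]
  | succ n ih =>
    constructor
    · show ((B lam E n) * (A lam E n)).det = 1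
      rw [Matrix.det_mul, ih.1, ih.2, mul_one]
    · show ((A lam E n) * (B lam E n)).det = 1
      rw [Matrix.det_mul, ih.1, ih.2, mul_one]

lemma t_rec (lam E : ℝ) (m : ℕ) :
    t lam E (m + 3) - 2 = (t lam E (m + 1)) ^ 2 * (t lam E (m + 2) - 2) := by
  have hT : (A lam E (m + 1)).trace = (B lam E (m + 1)).trace := by
    show (B lam E m * A lam E m).trace = (A lam E m * B lam E m).trace
    exact Matrix.trace_mul_comm _ _
  have hk := ch_tr (A lam E (m + 1)) (B lam E (m + 1)) (det_AB lam E (m + 1)).1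
    (det_AB lam E (m + 1)).2 hT
  have h1 : t lam E (m + 3)
      = ((A lam E (m + 1) * B lam E (m + 1)) * (B lam E (m + 1) * A lam E (m + 1))).trace := rfl
  have h2 : (A lam E (m + 1) * B lam E (m + 1)).trace = t lam E (m + 2) :=
    Matrix.trace_mul_comm _ _
  have h3 : (A lam E (m + 1)).trace = t lam E (m + 1) := rfl
  rw [h1, hk, h2, h3]; ring

lemma A2_sub_B2 (lam E : ℝ) :
    A lam E 2 - B lam E 2 = (4 * E * lam) • V + (2 * lam * (E ^ 2 - lam ^ 2)) • W := by
  ext i j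
  fin_cases i <;> fin_cases j <;>
    simp [A, B, AB, V, W, Matrix.mul_apply, Fin.sum_univ_two, Matrix.sub_apply,
      Matrix.add_apply, Matrix.smul_apply] <;> ring

lemma t2_eq (lam E : ℝ) : t lam E 2 = (E ^ 2 - lam ^ 2) ^ 2 - 4 * E ^ 2 + 2 := by
  simp [t, A, AB, Matrix.trace_fin_two, Matrix.mul_apply, Fin.sum_univ_two]; ring

lemma VW_inj {x y x' y' : ℝ} (h : x • V + y • W = x' • V + y' • W) : x = x' ∧ y = y' := by
  constructor
  · have := congrFun (congrFun h 0) 0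
    simpa [V, W] using this
  · have := congrFun (congrFun h 1) 0
    simpa [V, W] using this


/-- **Lemma (the ratio `ω_n/ν_n` at type-II and type-III energies).**
For every `E ∈ Σ_II ∪ Σ_III`: `E ≠ 0`, `ν_n(E) ≠ 0` for all `n ≥ 1`,
`ω_n(E)/ν_n(E) = (E²−λ²)/(2E)`, and `|(E²−λ²)/(2E)| < 1`. -/
theorem kappa_properties (lam : ℝ) (hlam : lam ≠ 0) (E : ℝ)
    (hE : E ∈ SigmaII lam ∪ SigmaIII lam)
    (ν ω : ℕ → ℝ)
    (hνω : ∀ n : ℕ, 1 ≤ n → A lam E (2 * n) - B lam E (2 * n) = ν n • V + ω n • W) :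
    E ≠ 0 ∧
    (∀ n : ℕ, 1 ≤ n → ν n ≠ 0 ∧ ω n / ν n = (E ^ 2 - lam ^ 2) / (2 * E)) ∧
    |(E ^ 2 - lam ^ 2) / (2 * E)| < 1 := by
  -- unify the two cases of hE
  have hE' : ∃ n₀ : ℕ, ∀ n, n₀ ≤ n →
      (|t lam E (2 * n)| ≤ 2 ∧ 2 < |t lam E (2 * n + 1)|) ∨
      (|t lam E (2 * n + 1)| ≤ 2 ∧ 2 < |t lam E (2 * n)|) := by
    rw [Set.mem_union] at hE
    rcases hE with h | h
    · obtain ⟨n₀, h⟩ := h; exact ⟨n₀, fun n hn => Or.inl (h n hn)⟩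
    · obtain ⟨n₀, h⟩ := h; exact ⟨n₀, fun n hn => Or.inr (h n hn)⟩
  obtain ⟨n₀, hP⟩ := hE'
  have hub : ∀ n, n₀ ≤ n → ∃ j, 2 * n ≤ j ∧ 2 < |t lam E j| := by
    intro n hn
    rcases hP n hn with ⟨_, h⟩ | ⟨_, h⟩
    · exact ⟨2 * n + 1, by omega, h⟩
    · exact ⟨2 * n, le_rfl, h⟩
  have hbd : ∀ n, n₀ ≤ n → ∃ j, 2 * n ≤ j ∧ |t lam E j| ≤ 2 := by
    intro n hn
    rcases hP n hn with ⟨h, _⟩ | ⟨h, _⟩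
    · exact ⟨2 * n, le_rfl, h⟩
    · exact ⟨2 * n + 1, by omega, h⟩
  -- the trace can never equal 2 at indices ≥ 2
  have noTwo : ∀ m : ℕ, t lam E (m + 2) ≠ 2 := by
    intro m h2
    have hall : ∀ k, t lam E (m + 2 + k) = 2 := by
      intro k
      induction k with
      | zero => exact h2
      | succ k ih =>
        have hp := t_rec lam E (m + k)
        rw [show m + k + 2 = m + 2 + k by omega, ih] at hp
        rw [show m + 2 + (k + 1) = m + k + 3 by omega]
        nlinarith [hp]
    obtain ⟨j, hj, hgt⟩ := hub (max n₀ (m + 2)) (le_max_left _ _)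
    have hj2 : m + 2 ≤ j := by
      have := le_max_right n₀ (m + 2); omega
    have hjj : t lam E j = 2 := by
      have := hall (j - (m + 2))
      rwa [show m + 2 + (j - (m + 2)) = j by omega] at this
    rw [hjj] at hgt
    norm_num at hgt
  -- t 2 < 2
  have t2lt : t lam E 2 < 2 := by
    by_contra hc
    push_neg at hc
    have hgt2 : ∀ m : ℕ, 2 < t lam E (m + 2) := by
      intro m
      induction m with
      | zero => exact lt_of_le_of_ne hc (Ne.symm (noTwo 0))
      | succ m ih =>
        have hp := t_rec lam E m
        have h1 : 0 ≤ (t lam E (m + 1)) ^ 2 * (t lam E (m + 2) - 2) :=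
          mul_nonneg (sq_nonneg _) (by linarith)
        have h2 : 2 ≤ t lam E (m + 3) := by linarith
        exact lt_of_le_of_ne h2 (Ne.symm (noTwo (m + 1)))
    obtain ⟨j, hj, hle⟩ := hbd (max n₀ 1) (le_max_left _ _)
    have hj2 : 2 ≤ j := by
      have := le_max_right n₀ 1; omega
    have h3 := hgt2 (j - 2)
    rw [show j - 2 + 2 = j by omega] at h3
    have := le_abs_self (t lam E j)
    linarith
  -- all traces at indices ≥ 2 are < 2
  have tlt : ∀ m : ℕ, t lam E (m + 2) < 2 := by
    intro m
    induction m with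
    | zero => exact t2lt
    | succ m ih =>
      have hp := t_rec lam E m
      have h1 : (t lam E (m + 1)) ^ 2 * (t lam E (m + 2) - 2) ≤ 0 :=
        mul_nonpos_of_nonneg_of_nonpos (sq_nonneg _) (by linarith)
      have h2 : t lam E (m + 3) ≤ 2 := by linarith
      exact lt_of_le_of_ne h2 (noTwo (m + 1))
  -- traces at indices ≥ 1 are nonzero
  have tnz : ∀ k : ℕ, t lam E (k + 1) ≠ 0 := by
    intro k h0
    have hp := t_rec lam E k
    rw [h0] at hp
    norm_num at hp
    exact noTwo (k + 1) (by linarith)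
  -- explicit value of t 2 gives E ≠ 0 and |κ| < 1
  have ht2 := t2_eq lam E
  have ht2' : (E ^ 2 - lam ^ 2) ^ 2 - 4 * E ^ 2 + 2 < 2 := by rw [← ht2]; exact t2lt
  have hE0 : E ≠ 0 := by
    intro h
    rw [h] at ht2'
    nlinarith [sq_nonneg (lam ^ 2)]
  have h2E : (2 : ℝ) * E ≠ 0 := by
    intro h; exact hE0 (by linarith)
  have hkappa : |(E ^ 2 - lam ^ 2) / (2 * E)| < 1 := by
    rw [abs_div]
    rw [div_lt_one (abs_pos.2 h2E)]
    apply lt_of_pow_lt_pow_left₀ 2 (abs_nonneg _)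
    rw [sq_abs, sq_abs]
    nlinarith [ht2']
  -- base case: ν 1 and ω 1
  have hbase := hνω 1 le_rfl
  rw [show 2 * 1 = 2 by norm_num, A2_sub_B2 lam E] at hbase
  obtain ⟨hν1, hω1⟩ := VW_inj hbase
  -- recursion for ν and ω
  have hrec : ∀ n : ℕ, 1 ≤ n →
      ν (n + 1) = (t lam E (2 * n) * (t lam E (2 * n + 1) - 2)) * ν n ∧
      ω (n + 1) = (t lam E (2 * n) * (t lam E (2 * n + 1) - 2)) * ω n := by
    intro n hn
    have hT : (A lam E (2 * n)).trace = (B lam E (2 * n)).trace := by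
      obtain ⟨m, hm⟩ : ∃ m, 2 * n = m + 1 := ⟨2 * n - 1, by omega⟩
      rw [hm]
      show (B lam E m * A lam E m).trace = (A lam E m * B lam E m).trace
      exact Matrix.trace_mul_comm _ _
    have hkey := key_mat (A lam E (2 * n)) (B lam E (2 * n)) (det_AB lam E (2 * n)).1
      (det_AB lam E (2 * n)).2 hT
    have htr : (A lam E (2 * n) * B lam E (2 * n)).trace = t lam E (2 * n + 1) :=
      Matrix.trace_mul_comm _ _
    have htr2 : (A lam E (2 * n)).trace = t lam E (2 * n) := rfl
    rw [htr, htr2] at hkey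
    have hA : A lam E (2 * n + 2)
        = (A lam E (2 * n) * B lam E (2 * n)) * (B lam E (2 * n) * A lam E (2 * n)) := rfl
    have hB : B lam E (2 * n + 2)
        = (B lam E (2 * n) * A lam E (2 * n)) * (A lam E (2 * n) * B lam E (2 * n)) := rfl
    have hD : A lam E (2 * n + 2) - B lam E (2 * n + 2)
        = (t lam E (2 * n) * (t lam E (2 * n + 1) - 2)) • (A lam E (2 * n) - B lam E (2 * n)) := by
      rw [hA, hB, hkey]
    have h2 := hνω (n + 1) (by omega)
    rw [show 2 * (n + 1) = 2 * n + 2 by ring] at h2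
    rw [h2, hνω n hn] at hD
    rw [smul_add, smul_smul, smul_smul] at hD
    exact VW_inj hD
  -- main induction
  set κ := (E ^ 2 - lam ^ 2) / (2 * E) with hκdef
  have hmain : ∀ n : ℕ, 1 ≤ n → ν n ≠ 0 ∧ ω n = κ * ν n := by
    intro n hn
    induction n, hn using Nat.le_induction with
    | base =>
      constructor
      · rw [← hν1]
        intro h
        rcases mul_eq_zero.1 h with h | h
        · rcases mul_eq_zero.1 h with h | h
          · norm_num at h
          · exact hE0 h
        · exact hlam h
      · rw [← hν1, ← hω1, hκdef]
        field_simp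
        ring
    | succ n hn ih =>
      obtain ⟨hν, hω⟩ := hrec n hn
      have hs : t lam E (2 * n) * (t lam E (2 * n + 1) - 2) ≠ 0 := by
        apply mul_ne_zero
        · obtain ⟨m, hm⟩ : ∃ m, 2 * n = m + 1 := ⟨2 * n - 1, by omega⟩
          rw [hm]; exact tnz m
        · obtain ⟨m, hm⟩ : ∃ m, 2 * n + 1 = m + 2 := ⟨2 * n - 1, by omega⟩
          rw [hm]
          have := tlt m
          intro h; linarith
      constructor
      · rw [hν]; exact mul_ne_zero hs ih.1
      · rw [hν, hω, ih.2]; ring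
  refine ⟨hE0, fun n hn => ⟨(hmain n hn).1, ?_⟩, hkappa⟩
  rw [(hmain n hn).2]
  rw [mul_comm]
  exact mul_div_cancel_left₀ _ (hmain n hn).1

end TMH
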